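/- Let x̄ be an extremal and let θ ∈ [t₀,t₁), λ ∈ [0,1), ξ ∈ ℝⁿ, and suppose x̄ is continuously differentiable on [θ, θ+α) ⊆ [t₀,t₁]. Then for every ε > 0 with ε ≤ min{α, ε₀} (where θ + ε₀ < t₁), the following integral identity holds: ∫_θ^{θ+ε} [ L̄_x(t)ᵀ h⁺(t;θ,λ,ξ,ε) + L̄_y(t)ᵀ ḣ⁺(t;θ,λ,ξ,ε) ] dt = 0, where ḣ⁺(t;θ,λ,ξ,ε) = ξ on (θ, θ+λε), = (λ/(λ−1))ξ on (θ+λε, θ+ε), and = 0 outside [θ, θ+ε]. -/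

import Mathlib

open Set Filter Topology MeasureTheory Asymptotics

noncomputable section

namespace CV

abbrev Vec (n : ℕ) := EuclideanSpace ℝ (Fin n)

/-- `x` is piecewise-C¹ on `[t0,t1]` with (finite) corner set `S ⊆ (t0,t1)`. -/
def PiecewiseC1On {n : ℕ} (t0 t1 : ℝ) (x : ℝ → Vec n) (S : Finset ℝ) : Prop :=
  ContinuousOn x (Icc t0 t1) ∧ (↑S : Set ℝ) ⊆ Ioo t0 t1 ∧
  (∀ t ∈ Ioo t0 t1, t ∉ S → DifferentiableAt ℝ x t) ∧
  ContinuousOn (deriv x) (Ioo t0 t1 \ (↑S : Set ℝ)) ∧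
  (∀ s ∈ S, (∃ l, Tendsto (deriv x) (𝓝[<] s) (𝓝 l)) ∧
            (∃ l, Tendsto (deriv x) (𝓝[>] s) (𝓝 l))) ∧
  (∃ l, Tendsto (deriv x) (𝓝[>] t0) (𝓝 l)) ∧
  (∃ l, Tendsto (deriv x) (𝓝[<] t1) (𝓝 l))

/-- The functional `J(x) = ∫_{t0}^{t1} L(t, x(t), ẋ(t)) dt`. -/
def Jfun {n : ℕ} (L : ℝ → Vec n → Vec n → ℝ) (t0 t1 : ℝ) (x : ℝ → Vec n) : ℝ :=
  ∫ t in t0..t1, L t (x t) (deriv x t)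

def AdmissibleWith {n : ℕ} (t0 t1 : ℝ) (x0 x1 : Vec n) (x : ℝ → Vec n) (S : Finset ℝ) : Prop :=
  PiecewiseC1On t0 t1 x S ∧ x t0 = x0 ∧ x t1 = x1

def Admissible {n : ℕ} (t0 t1 : ℝ) (x0 x1 : Vec n) (x : ℝ → Vec n) : Prop :=
  ∃ S : Finset ℝ, AdmissibleWith t0 t1 x0 x1 x S

/-- partial derivative of `L` in the `x` variable, as a continuous linear functional. -/
def Lx {n : ℕ} (L : ℝ → Vec n → Vec n → ℝ) (t : ℝ) (x y : Vec n) : Vec n →L[ℝ] ℝ :=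
  fderiv ℝ (fun x' => L t x' y) x

/-- partial derivative of `L` in the `y` (velocity) variable. -/
def Ly {n : ℕ} (L : ℝ → Vec n → Vec n → ℝ) (t : ℝ) (x y : Vec n) : Vec n →L[ℝ] ℝ :=
  fderiv ℝ (fun y' => L t x y') y

/-- `x` is an extremal: it is admissible with corner set `S` and satisfies the Euler
equation at all non-corner interior points. -/
def IsExtremalWith {n : ℕ} (L : ℝ → Vec n → Vec n → ℝ) (t0 t1 : ℝ) (x0 x1 : Vec n)
    (x : ℝ → Vec n) (S : Finset ℝ) : Prop :=
  AdmissibleWith t0 t1 x0 x1 x S ∧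
  ∀ t ∈ Ioo t0 t1, t ∉ S →
    HasDerivAt (fun s => Ly L s (x s) (deriv x s)) (Lx L t (x t) (deriv x t)) t

def IsExtremal {n : ℕ} (L : ℝ → Vec n → Vec n → ℝ) (t0 t1 : ℝ) (x0 x1 : Vec n)
    (x : ℝ → Vec n) : Prop :=
  ∃ S : Finset ℝ, IsExtremalWith L t0 t1 x0 x1 x S

def IsStrongLocalMin {n : ℕ} (L : ℝ → Vec n → Vec n → ℝ) (t0 t1 : ℝ) (x0 x1 : Vec n)
    (xb : ℝ → Vec n) : Prop :=
  Admissible t0 t1 x0 x1 xb ∧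
  ∃ δ > (0 : ℝ), ∀ x : ℝ → Vec n, Admissible t0 t1 x0 x1 x →
    (∀ t ∈ Icc t0 t1, ‖x t - xb t‖ ≤ δ) → Jfun L t0 t1 xb ≤ Jfun L t0 t1 x

def IsWeakLocalMin {n : ℕ} (L : ℝ → Vec n → Vec n → ℝ) (t0 t1 : ℝ) (x0 x1 : Vec n)
    (xb : ℝ → Vec n) : Prop :=
  Admissible t0 t1 x0 x1 xb ∧
  ∃ δ > (0 : ℝ), ∀ x : ℝ → Vec n, Admissible t0 t1 x0 x1 x →
    (∀ t ∈ Icc t0 t1, ‖x t - xb t‖ ≤ δ) →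
    (∀ t ∈ Icc t0 t1, DifferentiableAt ℝ x t → DifferentiableAt ℝ xb t →
      ‖deriv x t - deriv xb t‖ ≤ δ) →
    Jfun L t0 t1 xb ≤ Jfun L t0 t1 x

/-- Weierstrass excess `E(L̄)(t,ξ)` along `xb`, computed with the derivative function `v`. -/
def excess {n : ℕ} (L : ℝ → Vec n → Vec n → ℝ) (xb v : ℝ → Vec n) (t : ℝ) (ξ : Vec n) : ℝ :=
  L t (xb t) (v t + ξ) - L t (xb t) (v t) - Ly L t (xb t) (v t) ξ

/-- `ηᵀ ΔL̄_x(t,ξ) = (L_x(t, x̄(t), v(t)+ξ) − L̄_x(t)) η`. -/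
def dLx {n : ℕ} (L : ℝ → Vec n → Vec n → ℝ) (xb v : ℝ → Vec n) (t : ℝ) (ξ η : Vec n) : ℝ :=
  Lx L t (xb t) (v t + ξ) η - Lx L t (xb t) (v t) η

/-- `ηᵀ L̄_xx(t,ξ) η`. -/
def Lxx2 {n : ℕ} (L : ℝ → Vec n → Vec n → ℝ) (xb v : ℝ → Vec n) (t : ℝ) (ξ η : Vec n) : ℝ :=
  fderiv ℝ (fun x' => Lx L t x' (v t + ξ) η) (xb t) η

/-- `ηᵀ L_yy(t,x,y) η` at a point. -/
def Lyy2At {n : ℕ} (L : ℝ → Vec n → Vec n → ℝ) (t : ℝ) (x y η : Vec n) : ℝ :=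
  fderiv ℝ (fun y' => Ly L t x y' η) y η

/-- `ηᵀ L̄_yy(t) η` along `xb`. -/
def Lyy2 {n : ℕ} (L : ℝ → Vec n → Vec n → ℝ) (xb v : ℝ → Vec n) (t : ℝ) (η : Vec n) : ℝ :=
  Lyy2At L t (xb t) (v t) η

/-- `ηᵀ (L̄_xy(t) ξ)` (mixed derivative: `y`-derivative of `ξᵀL_x` in direction `η`). -/
def Lxy2 {n : ℕ} (L : ℝ → Vec n → Vec n → ℝ) (xb v : ℝ → Vec n) (t : ℝ) (ξ η : Vec n) : ℝ :=
  fderiv ℝ (fun y' => Lx L t (xb t) y' ξ) (v t) η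

/-- third directional derivative `D³_y L(t,x,·)[η,η,η]` at the point `y`. -/
def D3yAt {n : ℕ} (L : ℝ → Vec n → Vec n → ℝ) (t : ℝ) (x y η : Vec n) : ℝ :=
  fderiv ℝ (fun y' => Lyy2At L t x y' η) y η

def D3y {n : ℕ} (L : ℝ → Vec n → Vec n → ℝ) (xb v : ℝ → Vec n) (t : ℝ) (η : Vec n) : ℝ :=
  D3yAt L t (xb t) (v t) η

/-- `Q_i(t,λ,ξ)`. -/
def Qi {n : ℕ} (L : ℝ → Vec n → Vec n → ℝ) (xb v : ℝ → Vec n) (i : ℕ) (t lam : ℝ)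
    (ξ : Vec n) : ℝ :=
  lam ^ i * excess L xb v t ξ + (1 - lam ^ i) * excess L xb v t ((lam / (lam - 1)) • ξ)

/-- `M_i(t,λ,ξ)`. -/
def Mi {n : ℕ} (L : ℝ → Vec n → Vec n → ℝ) (xb v : ℝ → Vec n) (i : ℕ) (t lam : ℝ)
    (ξ : Vec n) : ℝ :=
  lam ^ i * dLx L xb v t ξ ξ
    + (1 - lam) * (1 / 2 + lam) ^ (i - 1) * dLx L xb v t ((lam / (lam - 1)) • ξ) ξ

/-- `W(θ,λ,ξ) = λ M₁ + (d/dt) Q₂`, with the `t`-derivative taken within the set `s`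
(one-sidedly where needed). -/
def Wfun {n : ℕ} (L : ℝ → Vec n → Vec n → ℝ) (xb v : ℝ → Vec n) (s : Set ℝ) (θ lam : ℝ)
    (ξ : Vec n) : ℝ :=
  lam * Mi L xb v 1 θ lam ξ + derivWithin (fun t => Qi L xb v 2 t lam ξ) s θ

/-- `G(θ,λ,ξ)`. -/
def Gfun {n : ℕ} (L : ℝ → Vec n → Vec n → ℝ) (xb v : ℝ → Vec n) (s : Set ℝ) (θ lam : ℝ)
    (ξ : Vec n) : ℝ :=
  lam ^ 2 * (lam * Lxx2 L xb v θ ξ ξ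
      + (1 - lam) * Lxx2 L xb v θ ((lam / (lam - 1)) • ξ) ξ)
    + 2 * lam * derivWithin (fun t => Mi L xb v 2 t lam ξ) s θ
    + derivWithin (derivWithin (fun t => Qi L xb v 3 t lam ξ) s) s θ

/-- `K(θ,ε,ξ)`. -/
def Kfun {n : ℕ} (L : ℝ → Vec n → Vec n → ℝ) (xb v : ℝ → Vec n) (s : Set ℝ) (θ ε : ℝ)
    (ξ : Vec n) : ℝ :=
  (dLx L xb v θ ξ ξ - Lxy2 L xb v θ ξ ξ)
    + derivWithin (fun t => excess L xb v t ξ) s θ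
    + ((1 + ε) / (2 * (1 - ε))) * derivWithin (fun t => Lyy2 L xb v t ξ) s θ

/-- the right variation `h⁺(t; θ, λ, ξ, ε)`. -/
def hplus {n : ℕ} (θ lam : ℝ) (ξ : Vec n) (ε t : ℝ) : Vec n :=
  if t ∈ Ico θ (θ + lam * ε) then (t - θ) • ξ
  else if t ∈ Ico (θ + lam * ε) (θ + ε) then ((lam / (lam - 1)) * (t - θ - ε)) • ξ
  else 0

/-- the left variation `h⁻(t; θ, λ, ξ, ε)`. -/
def hminus {n : ℕ} (θ lam : ℝ) (ξ : Vec n) (ε t : ℝ) : Vec n :=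
  if t ∈ Ioc (θ - lam * ε) θ then (t - θ) • ξ
  else if t ∈ Ioc (θ - ε) (θ - lam * ε) then ((lam / (lam - 1)) * (t - θ + ε)) • ξ
  else 0

def xplus {n : ℕ} (xb : ℝ → Vec n) (θ lam : ℝ) (ξ : Vec n) (ε : ℝ) : ℝ → Vec n :=
  fun t => xb t + hplus θ lam ξ ε t

def xminus {n : ℕ} (xb : ℝ → Vec n) (θ lam : ℝ) (ξ : Vec n) (ε : ℝ) : ℝ → Vec n :=
  fun t => xb t + hminus θ lam ξ ε t

/-- `x` is `k` times differentiable on `s` (derivatives taken within `s`);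
`DiffOnN x s 1` says `x` is C¹ on `s`. -/
def DiffOnN {n : ℕ} (x : ℝ → Vec n) (s : Set ℝ) : ℕ → Prop
  | 0 => ContinuousOn x s
  | (k + 1) => DifferentiableOn ℝ x s ∧ DiffOnN (derivWithin x s) s k

/-- the domain `(a,b) × ℝⁿ × ℝⁿ` of the integrand. -/
def LDomain (a b : ℝ) (n : ℕ) : Set (ℝ × Vec n × Vec n) :=
  (Ioo a b) ×ˢ (univ : Set (Vec n × Vec n))

def uncurryL {n : ℕ} (L : ℝ → Vec n → Vec n → ℝ) : ℝ × Vec n × Vec n → ℝ :=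
  fun p => L p.1 p.2.1 p.2.2

def uncurryLx {n : ℕ} (L : ℝ → Vec n → Vec n → ℝ) : ℝ × Vec n × Vec n → (Vec n →L[ℝ] ℝ) :=
  fun p => Lx L p.1 p.2.1 p.2.2

def uncurryLy {n : ℕ} (L : ℝ → Vec n → Vec n → ℝ) : ℝ × Vec n × Vec n → (Vec n →L[ℝ] ℝ) :=
  fun p => Ly L p.1 p.2.1 p.2.2

/-- the derivative `ḣ⁺(t; θ, λ, ξ, ε)` of the right variation. -/
def hplusDeriv {n : ℕ} (θ lam : ℝ) (ξ : Vec n) (ε t : ℝ) : Vec n :=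
  if t ∈ Ioo θ (θ + lam * ε) then ξ
  else if t ∈ Ioo (θ + lam * ε) (θ + ε) then (lam / (lam - 1)) • ξ
  else 0

/-!
Away from the corners of `x̄` and the kink `θ + λε` of `h⁺`, the Euler equation and the
product rule make the integrand the derivative of `t ↦ L̄_y(t) h⁺(t)`. Since `x̄` is C¹ on
`[θ, θ + ε)` and `ẋ̄` has one-sided limits at both ends, `L̄_y` extends continuously to
`[θ, θ + ε]`, so the fundamental theorem of calculus applies on each linear piece of `h⁺`;
the boundary terms cancel because `h⁺` vanishes at `θ` and at `θ + ε`.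
-/

section Lagrangian

variable {n : ℕ} {L : ℝ → Vec n → Vec n → ℝ} {a b : ℝ}

theorem Lx_eq_fderiv_comp {t : ℝ} {x y : Vec n}
    (hL : DifferentiableAt ℝ (uncurryL L) (t, x, y)) :
    Lx L t x y = (fderiv ℝ (uncurryL L) (t, x, y)).comp
      ((ContinuousLinearMap.inr ℝ ℝ (Vec n × Vec n)).comp
        (ContinuousLinearMap.inl ℝ (Vec n) (Vec n))) := by
  have hslice := (hasFDerivAt_prodMk_right (𝕜 := ℝ) t (x, y)).comp x
    (hasFDerivAt_prodMk_left (𝕜 := ℝ) x y)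
  exact (hL.hasFDerivAt.comp x hslice).fderiv

theorem Ly_eq_fderiv_comp {t : ℝ} {x y : Vec n}
    (hL : DifferentiableAt ℝ (uncurryL L) (t, x, y)) :
    Ly L t x y = (fderiv ℝ (uncurryL L) (t, x, y)).comp
      ((ContinuousLinearMap.inr ℝ ℝ (Vec n × Vec n)).comp
        (ContinuousLinearMap.inr ℝ (Vec n) (Vec n))) := by
  have hslice := (hasFDerivAt_prodMk_right (𝕜 := ℝ) t (x, y)).comp y
    (hasFDerivAt_prodMk_right (𝕜 := ℝ) x y)
  exact (hL.hasFDerivAt.comp y hslice).fderiv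

theorem isOpen_LDomain : IsOpen (LDomain a b n) :=
  isOpen_Ioo.prod isOpen_univ

theorem continuousOn_uncurryLx (hL : ContDiffOn ℝ 1 (uncurryL L) (LDomain a b n)) :
    ContinuousOn (uncurryLx L) (LDomain a b n) :=
  ((hL.continuousOn_fderiv_of_isOpen isOpen_LDomain le_rfl).clm_comp continuousOn_const).congr
    fun _ hp => Lx_eq_fderiv_comp
      ((hL.differentiableOn one_ne_zero).differentiableAt (isOpen_LDomain.mem_nhds hp))

theorem continuousOn_uncurryLy (hL : ContDiffOn ℝ 1 (uncurryL L) (LDomain a b n)) :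
    ContinuousOn (uncurryLy L) (LDomain a b n) :=
  ((hL.continuousOn_fderiv_of_isOpen isOpen_LDomain le_rfl).clm_comp continuousOn_const).congr
    fun _ hp => Ly_eq_fderiv_comp
      ((hL.differentiableOn one_ne_zero).differentiableAt (isOpen_LDomain.mem_nhds hp))

end Lagrangian

section PiecewiseC1

variable {n : ℕ} {t0 t1 : ℝ} {x : ℝ → Vec n} {S : Finset ℝ}

theorem PiecewiseC1On.continuousAt_deriv (hx : PiecewiseC1On t0 t1 x S) {s : ℝ}
    (hs : s ∈ Ioo t0 t1) (hsS : s ∉ S) : ContinuousAt (deriv x) s := by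
  obtain ⟨-, -, -, hcont, -⟩ := hx
  have hopen : IsOpen (Ioo t0 t1 \ (S : Set ℝ)) := isOpen_Ioo.sdiff S.finite_toSet.isClosed
  exact (hcont s ⟨hs, hsS⟩).continuousAt (hopen.mem_nhds ⟨hs, hsS⟩)

theorem PiecewiseC1On.exists_tendsto_deriv_nhdsGT (hx : PiecewiseC1On t0 t1 x S) {s : ℝ}
    (hs : s ∈ Ico t0 t1) : ∃ l, Tendsto (deriv x) (𝓝[>] s) (𝓝 l) := by
  have ⟨_, _, _, _, hcorner, hlim0, _⟩ := hx
  rcases hs.1.eq_or_lt with rfl | hs0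
  · exact hlim0
  by_cases hsS : s ∈ S
  · exact (hcorner s hsS).2
  · exact ⟨_, (hx.continuousAt_deriv ⟨hs0, hs.2⟩ hsS).tendsto.mono_left nhdsWithin_le_nhds⟩

theorem PiecewiseC1On.exists_tendsto_deriv_nhdsLT (hx : PiecewiseC1On t0 t1 x S) {s : ℝ}
    (hs : s ∈ Ioc t0 t1) : ∃ l, Tendsto (deriv x) (𝓝[<] s) (𝓝 l) := by
  have ⟨_, _, _, _, hcorner, _, hlim1⟩ := hx
  rcases hs.2.eq_or_lt with rfl | hs1
  · exact hlim1
  by_cases hsS : s ∈ S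
  · exact (hcorner s hsS).1
  · exact ⟨_, (hx.continuousAt_deriv ⟨hs.1, hs1⟩ hsS).tendsto.mono_left nhdsWithin_le_nhds⟩

theorem PiecewiseC1On.exists_continuousOn_Icc_eqOn_deriv (hx : PiecewiseC1On t0 t1 x S)
    {u v : ℝ} (hu : t0 ≤ u) (huv : u < v) (hv : v ≤ t1)
    (hcont : ContinuousOn (deriv x) (Ioo u v)) :
    ∃ w : ℝ → Vec n, ContinuousOn w (Icc u v) ∧ EqOn w (deriv x) (Ioo u v) := by
  obtain ⟨_, hu'⟩ := hx.exists_tendsto_deriv_nhdsGT ⟨hu, huv.trans_le hv⟩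
  obtain ⟨_, hv'⟩ := hx.exists_tendsto_deriv_nhdsLT ⟨hu.trans_lt huv, hv⟩
  exact ⟨_, continuousOn_Icc_extendFrom_Ioo hcont hu' hv', extendFrom_extends hcont⟩

end PiecewiseC1

theorem DiffOnN.continuousOn_deriv_interior {n : ℕ} {x : ℝ → Vec n} {s : Set ℝ}
    (hx : DiffOnN x s 1) : ContinuousOn (deriv x) (interior s) :=
  (hx.2.mono interior_subset).congr fun _ ht =>
    (derivWithin_of_mem_nhds (mem_interior_iff_mem_nhds.1 ht)).symm

section RightVariation

variable {n : ℕ} {θ lam ε : ℝ} (ξ : Vec n)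

theorem hplus_eq_max_min (hlam0 : 0 ≤ lam) (hlam1 : lam < 1) (t : ℝ) :
    hplus θ lam ξ ε t = max 0 (min (t - θ) (lam / (lam - 1) * (t - θ - ε))) • ξ := by
  set r := lam / (lam - 1)
  have hr : r ≤ 0 := div_nonpos_of_nonneg_of_nonpos hlam0 (by linarith)
  have hr' : (lam - 1) * (r * (t - θ - ε) - (t - θ)) = t - θ - lam * ε := by
    have : (lam - 1) * r = lam := mul_div_cancel₀ _ (by linarith)
    linear_combination (t - θ - ε) * this
  unfold hplus
  split_ifs with hA hB
  · rw [min_eq_left (by nlinarith [hA.2]), max_eq_right (by linarith [hA.1])]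
  · rw [min_eq_right (by nlinarith [hB.1]), max_eq_right (by nlinarith [hB.2])]
  · simp only [mem_Ico, not_and, not_lt] at hA hB
    rcases lt_or_ge t θ with ht | ht
    · rw [max_eq_left ((min_le_left _ _).trans (by linarith)), zero_smul]
    · rw [max_eq_left ((min_le_right _ _).trans (by nlinarith [hA ht, hB (hA ht)])), zero_smul]

theorem continuous_hplus (hlam0 : 0 ≤ lam) (hlam1 : lam < 1) :
    Continuous (hplus θ lam ξ ε) := by
  simp only [funext (hplus_eq_max_min ξ hlam0 hlam1)]
  fun_prop

theorem hplus_left_endpoint (hlam0 : 0 ≤ lam) (hlam1 : lam < 1) :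
    hplus θ lam ξ ε θ = 0 := by
  rw [hplus_eq_max_min ξ hlam0 hlam1, sub_self, max_eq_left (min_le_left _ _), zero_smul]

theorem hplus_right_endpoint (hlam0 : 0 ≤ lam) (hlam1 : lam < 1) :
    hplus θ lam ξ ε (θ + ε) = 0 := by
  rw [hplus_eq_max_min ξ hlam0 hlam1, show θ + ε - θ - ε = 0 by ring, mul_zero,
    max_eq_left (min_le_right _ _), zero_smul]

theorem hasDerivAt_hplus_of_mem_Ioo_left {t : ℝ} (ht : t ∈ Ioo θ (θ + lam * ε)) :
    HasDerivAt (hplus θ lam ξ ε) ξ t := by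
  have hlin : HasDerivAt (fun s => (s - θ) • ξ) ξ t := by
    simpa using ((hasDerivAt_id t).sub_const θ).smul_const ξ
  refine hlin.congr_of_eventuallyEq ?_
  filter_upwards [isOpen_Ioo.mem_nhds ht] with s hs
  rw [hplus, if_pos (Ioo_subset_Ico_self hs)]

theorem hasDerivAt_hplus_of_mem_Ioo_right {t : ℝ} (ht : t ∈ Ioo (θ + lam * ε) (θ + ε)) :
    HasDerivAt (hplus θ lam ξ ε) ((lam / (lam - 1)) • ξ) t := by
  have hlin : HasDerivAt (fun s => (lam / (lam - 1) * (s - θ - ε)) • ξ)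
      ((lam / (lam - 1)) • ξ) t := by
    simpa using
      ((((hasDerivAt_id t).sub_const θ).sub_const ε).const_mul (lam / (lam - 1))).smul_const ξ
  refine hlin.congr_of_eventuallyEq ?_
  filter_upwards [isOpen_Ioo.mem_nhds ht] with s hs
  rw [hplus, if_neg fun h => h.2.not_ge hs.1.le, if_pos (Ioo_subset_Ico_self hs)]

theorem hplusDeriv_of_mem_Ioo_left {t : ℝ} (ht : t ∈ Ioo θ (θ + lam * ε)) :
    hplusDeriv θ lam ξ ε t = ξ :=
  if_pos ht

theorem hplusDeriv_of_mem_Ioo_right {t : ℝ} (ht : t ∈ Ioo (θ + lam * ε) (θ + ε)) :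
    hplusDeriv θ lam ξ ε t = (lam / (lam - 1)) • ξ := by
  rw [hplusDeriv, if_neg fun h => h.2.not_gt ht.1, if_pos ht]

end RightVariation

section FirstVariation

variable {n : ℕ} {L : ℝ → Vec n → Vec n → ℝ} {a b : ℝ}

theorem continuousOn_Lx_comp (hL : ContDiffOn ℝ 1 (uncurryL L) (LDomain a b n)) {s : Set ℝ}
    {x y : ℝ → Vec n} (hs : s ⊆ Ioo a b) (hx : ContinuousOn x s) (hy : ContinuousOn y s) :
    ContinuousOn (fun t => Lx L t (x t) (y t)) s :=
  (continuousOn_uncurryLx hL).comp (continuousOn_id.prodMk (hx.prodMk hy))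
    fun _ ht => ⟨hs ht, mem_univ _⟩

theorem continuousOn_Ly_comp (hL : ContDiffOn ℝ 1 (uncurryL L) (LDomain a b n)) {s : Set ℝ}
    {x y : ℝ → Vec n} (hs : s ⊆ Ioo a b) (hx : ContinuousOn x s) (hy : ContinuousOn y s) :
    ContinuousOn (fun t => Ly L t (x t) (y t)) s :=
  (continuousOn_uncurryLy hL).comp (continuousOn_id.prodMk (hx.prodMk hy))
    fun _ ht => ⟨hs ht, mem_univ _⟩

theorem integral_Lx_add_Ly_eq_sub (hL : ContDiffOn ℝ 1 (uncurryL L) (LDomain a b n))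
    {xb w h h' g : ℝ → Vec n} {u v : ℝ} {S : Set ℝ} (huv : u ≤ v)
    (hIcc : Icc u v ⊆ Ioo a b)
    (hxb : ContinuousOn xb (Icc u v)) (hw : ContinuousOn w (Icc u v))
    (hwd : EqOn w (deriv xb) (Ioo u v)) (hS : S.Countable)
    (hEuler : ∀ t ∈ Ioo u v \ S,
      HasDerivAt (fun s => Ly L s (xb s) (deriv xb s)) (Lx L t (xb t) (deriv xb t)) t)
    (hh : ContinuousOn h (Icc u v)) (hhd : ∀ t ∈ Ioo u v, HasDerivAt h (g t) t)
    (hg : ContinuousOn g (Icc u v)) (hh' : EqOn h' g (Ioo u v)) :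
    IntervalIntegrable
        (fun t => Lx L t (xb t) (deriv xb t) (h t) + Ly L t (xb t) (deriv xb t) (h' t))
        volume u v ∧
      ∫ t in u..v, (Lx L t (xb t) (deriv xb t) (h t) + Ly L t (xb t) (deriv xb t) (h' t)) =
        Ly L v (xb v) (w v) (h v) - Ly L u (xb u) (w u) (h u) := by
  have hLx := continuousOn_Lx_comp hL hIcc hxb hw
  have hLy := continuousOn_Ly_comp hL hIcc hxb hw
  have hint : IntervalIntegrable
      (fun t => Lx L t (xb t) (deriv xb t) (h t) + Ly L t (xb t) (deriv xb t) (h' t))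
      volume u v := by
    refine ((hLx.clm_apply hh).add (hLy.clm_apply hg)).intervalIntegrable_of_Icc huv
      |>.congr_uIoo ?_
    rw [uIoo_of_le huv]
    intro t ht
    simp only [Pi.add_apply, hwd ht, hh' ht]
  refine ⟨hint, integral_eq_of_hasDerivAt_off_countable_of_le _ _ huv hS (hLy.clm_apply hh)
    (fun t ht => ?_) hint⟩
  have hev : (fun s => Ly L s (xb s) (w s)) =ᶠ[𝓝 t] fun s => Ly L s (xb s) (deriv xb s) := by
    filter_upwards [isOpen_Ioo.mem_nhds ht.1] with s hs
    rw [hwd hs]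
  have hderiv := ((hEuler t ht).congr_of_eventuallyEq hev).clm_apply (hhd t ht.1)
  rwa [hwd ht.1, ← hh' ht.1] at hderiv

theorem integral_Lx_hplus_add_Ly_hplusDeriv_eq_zero
    (hL : ContDiffOn ℝ 1 (uncurryL L) (LDomain a b n)) {xb w : ℝ → Vec n} {θ lam ε : ℝ}
    {S : Set ℝ} (ξ : Vec n) (hlam0 : 0 ≤ lam) (hlam1 : lam < 1) (hε : 0 ≤ ε)
    (hIcc : Icc θ (θ + ε) ⊆ Ioo a b) (hxb : ContinuousOn xb (Icc θ (θ + ε)))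
    (hw : ContinuousOn w (Icc θ (θ + ε))) (hwd : EqOn w (deriv xb) (Ioo θ (θ + ε)))
    (hS : S.Countable)
    (hEuler : ∀ t ∈ Ioo θ (θ + ε) \ S,
      HasDerivAt (fun s => Ly L s (xb s) (deriv xb s)) (Lx L t (xb t) (deriv xb t)) t) :
    ∫ t in θ..(θ + ε),
      ((Lx L t (xb t) (deriv xb t)) (hplus θ lam ξ ε t)
        + (Ly L t (xb t) (deriv xb t)) (hplusDeriv θ lam ξ ε t)) = 0 := by
  have hkink₁ : θ ≤ θ + lam * ε := by nlinarith
  have hkink₂ : θ + lam * ε ≤ θ + ε := by nlinarith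
  have piece := fun u v (d : Vec n) (hu : θ ≤ u) (huv : u ≤ v) (hv : v ≤ θ + ε) =>
    have hsub : Icc u v ⊆ Icc θ (θ + ε) := Icc_subset_Icc hu hv
    integral_Lx_add_Ly_eq_sub (h := hplus θ lam ξ ε) (h' := hplusDeriv θ lam ξ ε)
      (g := fun _ => d) hL huv (hsub.trans hIcc) (hxb.mono hsub) (hw.mono hsub)
      (hwd.mono (Ioo_subset_Ioo hu hv)) hS
      (fun t ht => hEuler t ⟨Ioo_subset_Ioo hu hv ht.1, ht.2⟩)
      (continuous_hplus ξ hlam0 hlam1).continuousOn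
  obtain ⟨hint₁, hI₁⟩ := piece θ _ ξ le_rfl hkink₁ hkink₂
    (fun _ => hasDerivAt_hplus_of_mem_Ioo_left ξ) continuousOn_const
    (fun _ => hplusDeriv_of_mem_Ioo_left ξ)
  obtain ⟨hint₂, hI₂⟩ := piece _ (θ + ε) _ hkink₁ hkink₂ le_rfl
    (fun _ => hasDerivAt_hplus_of_mem_Ioo_right ξ) continuousOn_const
    (fun _ => hplusDeriv_of_mem_Ioo_right ξ)
  rw [← intervalIntegral.integral_add_adjacent_intervals hint₁ hint₂, hI₁, hI₂,
    hplus_left_endpoint ξ hlam0 hlam1, hplus_right_endpoint ξ hlam0 hlam1]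
  simp

end FirstVariation

theorem eq2_3_general {n : ℕ} {a t0 t1 b : ℝ} (ha : a < t0) (hb : t1 < b)
    (x0 x1 : Vec n) (L : ℝ → Vec n → Vec n → ℝ)
    (hL : ContDiffOn ℝ 1 (uncurryL L) (LDomain a b n))
    (xb : ℝ → Vec n) (hext : IsExtremal L t0 t1 x0 x1 xb)
    (θ : ℝ) (hθ : θ ∈ Ico t0 t1) (lam : ℝ) (hlam : lam ∈ Ico (0 : ℝ) 1) (ξ : Vec n)
    (α : ℝ) (hC1 : DiffOnN xb (Ico θ (θ + α)) 1)
    (ε0 : ℝ) (hε0' : θ + ε0 < t1) :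
    ∀ ε : ℝ, 0 < ε → ε ≤ min α ε0 →
      (∫ t in θ..(θ + ε),
        ((Lx L t (xb t) (deriv xb t)) (hplus θ lam ξ ε t)
          + (Ly L t (xb t) (deriv xb t)) (hplusDeriv θ lam ξ ε t))) = 0 := by
  intro ε hε hεle
  obtain ⟨S, ⟨hpc, -, -⟩, hEuler⟩ := hext
  have hεα : ε ≤ α := hεle.trans (min_le_left _ _)
  have hend : θ + ε < t1 := by linarith [min_le_right α ε0]
  have hsub : Icc θ (θ + ε) ⊆ Icc t0 t1 := Icc_subset_Icc hθ.1 hend.le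
  have hderiv : ContinuousOn (deriv xb) (Ioo θ (θ + ε)) := by
    refine hC1.continuousOn_deriv_interior.mono ?_
    rw [interior_Ico]
    exact Ioo_subset_Ioo_right (by linarith)
  obtain ⟨w, hw, hwd⟩ :=
    hpc.exists_continuousOn_Icc_eqOn_deriv hθ.1 (by linarith) hend.le hderiv
  refine integral_Lx_hplus_add_Ly_hplusDeriv_eq_zero hL ξ hlam.1 hlam.2 hε.le
    (fun t ht => ⟨by linarith [(hsub ht).1], by linarith [(hsub ht).2]⟩) (hpc.1.mono hsub)
    hw hwd S.countable_toSet fun t ht => hEuler t ?_ ht.2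
  exact ⟨by linarith [hθ.1, ht.1.1], by linarith [ht.1.2]⟩

/-- **Equation (2.3)**: along an extremal, the first-variation integral of the right
variation `h⁺` vanishes, for all sufficiently small `ε > 0`. -/
theorem eq2_3 {n : ℕ} {a t0 t1 b : ℝ} (ha : a < t0) (ht : t0 < t1) (hb : t1 < b)
    (x0 x1 : Vec n) (L : ℝ → Vec n → Vec n → ℝ)
    (hL : ContDiffOn ℝ 1 (uncurryL L) (LDomain a b n))
    (xb : ℝ → Vec n) (hext : IsExtremal L t0 t1 x0 x1 xb)
    (θ : ℝ) (hθ : θ ∈ Ico t0 t1) (lam : ℝ) (hlam : lam ∈ Ico (0 : ℝ) 1) (ξ : Vec n)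
    (α : ℝ) (hα : 0 < α) (hsub : Ico θ (θ + α) ⊆ Icc t0 t1)
    (hC1 : DiffOnN xb (Ico θ (θ + α)) 1)
    (ε0 : ℝ) (hε0 : 0 < ε0) (hε0' : θ + ε0 < t1) :
    ∀ ε : ℝ, 0 < ε → ε ≤ min α ε0 →
      (∫ t in θ..(θ + ε),
        ((Lx L t (xb t) (deriv xb t)) (hplus θ lam ξ ε t)
          + (Ly L t (xb t) (deriv xb t)) (hplusDeriv θ lam ξ ε t))) = 0 :=
  eq2_3_general ha hb x0 x1 L hL xb hext θ hθ lam hlam ξ α hC1 ε0 hε0'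

end CV
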